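/- Under the same hypotheses, if in addition the interface velocities are chosen by upwinding according to the sign of the mass exchange, i.e. u_{α+1/2}(x,t) = u_{α+1}(x,t) when G_{α+1/2}(x,t) ≥ 0 and u_{α+1/2}(x,t) = u_α(x,t) when G_{α+1/2}(x,t) < 0, then the exchange contribution equals −Σ_{α=1}^{N−1} |G_{α+1/2}|·(u_{α+1} − u_α)²/2 ≤ 0, and consequently smooth solutions satisfy the energy dissipation inequality ∂ₜΣ_{α=1}^N E_α + ∂ₓΣ_{α=1}^N u_α(E_α + (g/2) h_α H) ≤ H∂ₜp^a + gH∂ₜz_b. -/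

import Mathlib

/-!
Multiplying the momentum equation of layer `α` by `u_α` and adding `g η + pᵃ - u_α²/2` times its
mass defect `∂ₜh_α + ∂ₓ(h_α u_α) = G_{α+1/2} - G_{α-1/2}` gives the layer energy balance
`∂ₜE_α + ∂ₓ(u_α (E_α + g h_α H / 2)) = h_α ∂ₜ(pᵃ + g z_b)
  + u_α (u_{α+1/2} G_{α+1/2} - u_{α-1/2} G_{α-1/2}) - (u_α²/2 - g η - pᵃ)(G_{α+1/2} - G_{α-1/2})`.
Summing over the layers, `∑ h_α = H` produces `H ∂ₜpᵃ + g H ∂ₜz_b`, and since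
`G_{1/2} = G_{N+1/2} = 0` (the latter is global mass conservation) an Abel summation regroups the
exchange terms interface by interface into `G_{α+1/2} (u_{α+1/2} - (u_α + u_{α+1})/2)(u_α - u_{α+1})`;
the head `g η + pᵃ` drops out because it is the same in all layers. Upwinding makes each of these
`-|G_{α+1/2}| (u_{α+1} - u_α)²/2 ≤ 0`.
-/

open Finset

section Partials

variable {𝕜 E F G : Type*} [NontriviallyNormedField 𝕜] [NormedAddCommGroup E] [NormedSpace 𝕜 E]
  [NormedAddCommGroup F] [NormedSpace 𝕜 F] [NormedAddCommGroup G] [NormedSpace 𝕜 G]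
  {f : E → F → G} {x : E} {t : F}

theorem DifferentiableAt.partial_fst (hf : DifferentiableAt 𝕜 (fun q : E × F => f q.1 q.2) (x, t)) :
    DifferentiableAt 𝕜 (fun y => f y t) x :=
  DifferentiableAt.comp (g := fun q : E × F => f q.1 q.2) (f := fun y => (y, t)) x hf
    (differentiableAt_id.prodMk (differentiableAt_const t))

theorem DifferentiableAt.partial_snd (hf : DifferentiableAt 𝕜 (fun q : E × F => f q.1 q.2) (x, t)) :
    DifferentiableAt 𝕜 (fun τ => f x τ) t :=
  DifferentiableAt.comp (g := fun q : E × F => f q.1 q.2) t hf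
    ((differentiableAt_const x).prodMk differentiableAt_id)

end Partials

theorem Fin.sum_filter_val_lt_succ {M : Type*} [AddCommMonoid M] {n : ℕ} (f : Fin n → M) (α : Fin n) :
    ∑ j ∈ univ.filter (fun j : Fin n => (j : ℕ) < α + 1), f j
      = ∑ j ∈ univ.filter (fun j : Fin n => (j : ℕ) < α), f j + f α := by
  have : univ.filter (fun j : Fin n => (j : ℕ) < α + 1)
      = insert α (univ.filter (fun j : Fin n => (j : ℕ) < α)) := by
    ext j; simp only [mem_filter, mem_univ, true_and, mem_insert]; omega
  rw [this, sum_insert (by simp), add_comm]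

theorem upwind_exchange_eq {G w a b : ℝ} (hpos : 0 ≤ G → w = b) (hneg : G < 0 → w = a) :
    G * (w - (a + b) / 2) * (a - b) = -(|G| * (b - a) ^ 2 / 2) := by
  rcases le_or_gt 0 G with hG | hG
  · rw [hpos hG, abs_of_nonneg hG]; ring
  · rw [hneg hG, abs_of_neg hG]; ring

section Interfaces

variable {N : ℕ} (G w : ℕ → ℝ) (v : Fin (N + 1) → ℝ)

theorem sum_upwind_exchange_eq
    (hup : ∀ β : Fin N, (0 ≤ G (β + 1) → w (β + 1) = v β.succ) ∧
      (G (β + 1) < 0 → w (β + 1) = v β.castSucc)) :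
    ∑ β : Fin N, G (β + 1) * (w (β + 1) - (v β.castSucc + v β.succ) / 2) * (v β.castSucc - v β.succ)
      = -∑ β : Fin N, |G (β + 1)| * (v β.succ - v β.castSucc) ^ 2 / 2 := by
  rw [← sum_neg_distrib]
  exact sum_congr rfl fun β _ => upwind_exchange_eq (hup β).1 (hup β).2

theorem sum_upwind_exchange_nonpos
    (hup : ∀ β : Fin N, (0 ≤ G (β + 1) → w (β + 1) = v β.succ) ∧
      (G (β + 1) < 0 → w (β + 1) = v β.castSucc)) :
    ∑ β : Fin N, G (β + 1) * (w (β + 1) - (v β.castSucc + v β.succ) / 2)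
      * (v β.castSucc - v β.succ) ≤ 0 := by
  rw [sum_upwind_exchange_eq G w v hup, neg_nonpos]
  positivity

theorem sum_layer_exchange_eq (c : ℝ) (h0 : G 0 = 0) (hN : G (N + 1) = 0) :
    ∑ α : Fin (N + 1), (v α * (w (α + 1) * G (α + 1) - w α * G α)
        - (v α ^ 2 / 2 - c) * (G (α + 1) - G α))
      = ∑ β : Fin N, G (β + 1) * (w (β + 1) - (v β.castSucc + v β.succ) / 2)
          * (v β.castSucc - v β.succ) := by
  set top : Fin (N + 1) → ℝ := fun α => (v α * w (α + 1) - (v α ^ 2 / 2 - c)) * G (α + 1)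
  set bot : Fin (N + 1) → ℝ := fun α => (v α * w α - (v α ^ 2 / 2 - c)) * G α
  calc _ = ∑ α, top α - ∑ α, bot α := by
        rw [← sum_sub_distrib]; exact sum_congr rfl fun α _ => by simp only [top, bot]; ring
    _ = ∑ β : Fin N, (top β.castSucc - bot β.succ) := by
        rw [Fin.sum_univ_castSucc top, Fin.sum_univ_succ bot, sum_sub_distrib]
        simp [top, bot, h0, hN]
    _ = _ := sum_congr rfl fun β _ => by simp only [top, bot, Fin.val_castSucc, Fin.val_succ]; ring

end Interfaces

noncomputable def layerEnergy (l g H u pa zb : ℝ) : ℝ :=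
  l * H * u ^ 2 / 2 + g * (l * H) * ((H + zb) + zb) / 2 + l * H * pa

section OneVariable

variable {H u p z : ℝ → ℝ} {H' u' p' z' s : ℝ} (l g : ℝ)

theorem HasDerivAt.layerEnergy (hH : HasDerivAt H H' s) (hu : HasDerivAt u u' s)
    (hp : HasDerivAt p p' s) (hz : HasDerivAt z z' s) :
    HasDerivAt (fun s => layerEnergy l g (H s) (u s) (p s) (z s))
      (l * H' * u s ^ 2 / 2 + l * H s * u s * u' + g * l * (H' * (H s + z s) + H s * z')
        + l * (H' * p s + H s * p')) s := by
  have hh := hH.const_mul l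
  refine ((((hh.fun_mul (hu.fun_pow 2)).div_const 2).fun_add
    (((hh.const_mul g).fun_mul ((hH.fun_add hz).fun_add hz)).div_const 2)).fun_add
    (hh.fun_mul hp)).congr_deriv ?_
  simp only [Nat.cast_ofNat]
  ring

theorem hasDerivAt_layerEnergy (hH : DifferentiableAt ℝ H s) (hu : DifferentiableAt ℝ u s)
    (hp : DifferentiableAt ℝ p s) (hz : DifferentiableAt ℝ z s) :
    HasDerivAt (fun s => layerEnergy l g (H s) (u s) (p s) (z s))
      (u s * deriv (fun s => l * H s * u s) s
        + (g * (H s + z s) + p s - u s ^ 2 / 2) * deriv (fun s => l * H s) s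
        + l * H s * (deriv p s + g * deriv z s)) s := by
  have hh := hH.hasDerivAt.const_mul l
  rw [hh.deriv, (hh.fun_mul hu.hasDerivAt).deriv]
  refine (hH.hasDerivAt.layerEnergy l g hu.hasDerivAt hp.hasDerivAt hz.hasDerivAt).congr_deriv ?_
  ring

theorem hasDerivAt_layerEnergyFlux (hl : l ≠ 0) (hH : DifferentiableAt ℝ H s)
    (hu : DifferentiableAt ℝ u s) (hp : DifferentiableAt ℝ p s) (hz : DifferentiableAt ℝ z s) :
    HasDerivAt (fun s => u s * (layerEnergy l g (H s) (u s) (p s) (z s) + g / 2 * (l * H s) * H s))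
      (u s * deriv (fun s => l * H s * u s ^ 2 + g / (2 * l) * (l * H s) ^ 2) s
        + (g * (H s + z s) + p s - u s ^ 2 / 2) * deriv (fun s => l * H s * u s) s
        + l * H s * u s * (deriv p s + g * deriv z s)) s := by
  have hh := hH.hasDerivAt.const_mul l
  rw [(hh.fun_mul hu.hasDerivAt).deriv,
    ((hh.fun_mul (hu.hasDerivAt.fun_pow 2)).fun_add ((hh.fun_pow 2).const_mul (g / (2 * l)))).deriv]
  refine (hu.hasDerivAt.fun_mul
    ((hH.hasDerivAt.layerEnergy l g hu.hasDerivAt hp.hasDerivAt hz.hasDerivAt).fun_add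
      ((hh.const_mul (g / 2)).fun_mul hH.hasDerivAt))).congr_deriv ?_
  simp only [layerEnergy, Nat.cast_ofNat]
  field_simp
  ring

end OneVariable

section Layers

variable {ι : Type*} [Fintype ι] {H p z : ℝ → ℝ → ℝ} {u : ι → ℝ → ℝ → ℝ} {l : ι → ℝ} {x t : ℝ}

theorem sum_deriv_layerMass (hlsum : ∑ i, l i = 1)
    (hH : DifferentiableAt ℝ (fun q : ℝ × ℝ => H q.1 q.2) (x, t))
    (hu : ∀ i, DifferentiableAt ℝ (fun q : ℝ × ℝ => u i q.1 q.2) (x, t)) :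
    ∑ i, (deriv (fun τ => l i * H x τ) t + deriv (fun y => l i * H y t * u i y t) x)
      = deriv (fun τ => H x τ) t + deriv (fun y => ∑ i, l i * H y t * u i y t) x := by
  rw [sum_add_distrib,
    deriv_fun_sum fun i _ => (hH.partial_fst.const_mul (l i)).fun_mul (hu i).partial_fst]
  simp only [deriv_const_mul_field']
  rw [← sum_mul, hlsum, one_mul]

theorem sum_layerEnergy_balance (g : ℝ) (S : ι → ℝ) (hl : ∀ i, l i ≠ 0)
    (hH : DifferentiableAt ℝ (fun q : ℝ × ℝ => H q.1 q.2) (x, t))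
    (hu : ∀ i, DifferentiableAt ℝ (fun q : ℝ × ℝ => u i q.1 q.2) (x, t))
    (hp : DifferentiableAt ℝ (fun q : ℝ × ℝ => p q.1 q.2) (x, t))
    (hz : DifferentiableAt ℝ (fun q : ℝ × ℝ => z q.1 q.2) (x, t))
    (hmom : ∀ i, deriv (fun τ => l i * H x τ * u i x τ) t
        + deriv (fun y => l i * H y t * u i y t ^ 2 + g / (2 * l i) * (l i * H y t) ^ 2) x
      = -(l i * H x t) * deriv (fun y => p y t) x - g * (l i * H x t) * deriv (fun y => z y t) x
        + S i) :
    deriv (fun τ => ∑ i, layerEnergy (l i) g (H x τ) (u i x τ) (p x τ) (z x τ)) t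
      + deriv (fun y => ∑ i, u i y t * (layerEnergy (l i) g (H y t) (u i y t) (p y t) (z y t)
          + g / 2 * (l i * H y t) * H y t)) x
      = ∑ i, (u i x t * S i
          + (g * (H x t + z x t) + p x t - u i x t ^ 2 / 2)
            * (deriv (fun τ => l i * H x τ) t + deriv (fun y => l i * H y t * u i y t) x)
          + l i * H x t * (deriv (fun τ => p x τ) t + g * deriv (fun τ => z x τ) t)) := by
  rw [(HasDerivAt.fun_sum fun i _ => hasDerivAt_layerEnergy (l i) g hH.partial_snd
      (hu i).partial_snd hp.partial_snd hz.partial_snd).deriv,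
    (HasDerivAt.fun_sum fun i _ => hasDerivAt_layerEnergyFlux (l i) g (hl i) hH.partial_fst
      (hu i).partial_fst hp.partial_fst hz.partial_fst).deriv, ← sum_add_distrib]
  exact sum_congr rfl fun i _ => by linear_combination u i x t * hmom i

end Layers

theorem multilayer_energy_dissipation_upwind_general
    (N : ℕ) (g : ℝ)
    (l : Fin (N + 1) → ℝ) (hl : ∀ α, 0 < l α) (hlsum : ∑ α, l α = 1)
    (H pa zb : ℝ → ℝ → ℝ) (u : Fin (N + 1) → ℝ → ℝ → ℝ)
    (hH : ContDiff ℝ 1 fun p : ℝ × ℝ => H p.1 p.2)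
    (hu : ∀ α, ContDiff ℝ 1 fun p : ℝ × ℝ => u α p.1 p.2)
    (hpa : ContDiff ℝ 1 fun p : ℝ × ℝ => pa p.1 p.2)
    (hzb : ContDiff ℝ 1 fun p : ℝ × ℝ => zb p.1 p.2)
    (uhalf : ℕ → ℝ → ℝ → ℝ)
    (G : ℕ → ℝ → ℝ → ℝ)
    (hG : ∀ k x t, G k x t =
      ∑ j ∈ Finset.univ.filter (fun j : Fin (N + 1) => (j : ℕ) < k),
        (deriv (fun τ => l j * H x τ) t + deriv (fun y => l j * H y t * u j y t) x))
    (hcont : ∀ x t, deriv (fun τ => H x τ) t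
      + deriv (fun y => ∑ α, l α * H y t * u α y t) x = 0)
    (hmom : ∀ α : Fin (N + 1), ∀ x t,
      deriv (fun τ => l α * H x τ * u α x τ) t
        + deriv (fun y => l α * H y t * (u α y t) ^ 2
            + g / (2 * l α) * (l α * H y t) ^ 2) x
      = -(l α * H x t) * deriv (fun y => pa y t) x
        - g * (l α * H x t) * deriv (fun y => zb y t) x
        + uhalf ((α : ℕ) + 1) x t * G ((α : ℕ) + 1) x t
        - uhalf (α : ℕ) x t * G (α : ℕ) x t)
    (E : Fin (N + 1) → ℝ → ℝ → ℝ)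
    (hE : ∀ α y t, E α y t =
      l α * H y t * (u α y t) ^ 2 / 2
        + g * (l α * H y t) * ((H y t + zb y t) + zb y t) / 2
        + l α * H y t * pa y t)
    (hupwind : ∀ β : Fin N, ∀ x t,
      (0 ≤ G ((β : ℕ) + 1) x t → uhalf ((β : ℕ) + 1) x t = u β.succ x t) ∧
      (G ((β : ℕ) + 1) x t < 0 → uhalf ((β : ℕ) + 1) x t = u β.castSucc x t)) :
    (∀ x t,
      (∑ β : Fin N,
          G ((β : ℕ) + 1) x t
            * (uhalf ((β : ℕ) + 1) x t - (u β.castSucc x t + u β.succ x t) / 2)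
            * (u β.castSucc x t - u β.succ x t))
        = -∑ β : Fin N,
            |G ((β : ℕ) + 1) x t| * (u β.succ x t - u β.castSucc x t) ^ 2 / 2 ∧
      (∑ β : Fin N,
          G ((β : ℕ) + 1) x t
            * (uhalf ((β : ℕ) + 1) x t - (u β.castSucc x t + u β.succ x t) / 2)
            * (u β.castSucc x t - u β.succ x t)) ≤ 0) ∧
    (∀ x t,
      deriv (fun τ => ∑ α, E α x τ) t
        + deriv (fun y => ∑ α, u α y t * (E α y t + g / 2 * (l α * H y t) * H y t)) x
      ≤ H x t * deriv (fun τ => pa x τ) t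
        + g * H x t * deriv (fun τ => zb x τ) t) := by
  obtain rfl : E = fun α y t => layerEnergy (l α) g (H y t) (u α y t) (pa y t) (zb y t) :=
    funext fun α => funext fun y => funext fun t => hE α y t
  refine ⟨fun x t => ⟨sum_upwind_exchange_eq (G · x t) (uhalf · x t) (u · x t) (hupwind · x t),
    sum_upwind_exchange_nonpos (G · x t) (uhalf · x t) (u · x t) (hupwind · x t)⟩, fun x t => ?_⟩
  have hdiff {F : ℝ → ℝ → ℝ} (hF : ContDiff ℝ 1 fun q : ℝ × ℝ => F q.1 q.2) :
      DifferentiableAt ℝ (fun q : ℝ × ℝ => F q.1 q.2) (x, t) :=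
    (hF.differentiable one_ne_zero).differentiableAt
  have hG0 : G 0 x t = 0 := by simp [hG]
  have hGsucc (α : Fin (N + 1)) : G (α + 1) x t - G α x t
      = deriv (fun τ => l α * H x τ) t + deriv (fun y => l α * H y t * u α y t) x := by
    rw [hG, hG, Fin.sum_filter_val_lt_succ]; ring
  have hGtop : G (N + 1) x t = 0 := by
    rw [hG, filter_true_of_mem fun j _ => j.isLt,
      sum_deriv_layerMass hlsum (hdiff hH) fun α => hdiff (hu α)]
    exact hcont x t
  beta_reduce
  have hdiss := sum_upwind_exchange_nonpos (G · x t) (uhalf · x t) (u · x t) (hupwind · x t)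
  rw [← sum_layer_exchange_eq (G · x t) (uhalf · x t) (u · x t) (g * (H x t + zb x t) + pa x t)
    hG0 hGtop] at hdiss
  rw [sum_layerEnergy_balance g
    (fun α : Fin (N + 1) => uhalf (α + 1) x t * G (α + 1) x t - uhalf α x t * G α x t)
    (fun α => (hl α).ne')
    (hdiff hH) (fun α => hdiff (hu α)) (hdiff hpa) (hdiff hzb) fun α => by rw [hmom]; ring]
  calc _ = ∑ α : Fin (N + 1), (u α x t * (uhalf (α + 1) x t * G (α + 1) x t - uhalf α x t * G α x t)
          - (u α x t ^ 2 / 2 - (g * (H x t + zb x t) + pa x t)) * (G (α + 1) x t - G α x t))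
        + (∑ α, l α) * (H x t * (deriv (fun τ => pa x τ) t + g * deriv (fun τ => zb x τ) t)) := by
        rw [sum_mul, ← sum_add_distrib]
        exact sum_congr rfl fun α _ => by rw [hGsucc]; ring
    _ ≤ _ := by rw [hlsum]; linarith

/-- With upwinded interface velocities, the exchange contribution in the energy
balance of the inviscid multilayer Saint-Venant system equals
`−∑ |G_{α+1/2}|·(u_{α+1} − u_α)²/2 ≤ 0`, hence smooth solutions satisfy the
energy dissipation inequality. Layers are indexed by `Fin (N+1)` (0-based);
the interior interface `β : Fin N` sits between layers `β.castSucc` and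
`β.succ`. -/
theorem multilayer_energy_dissipation_upwind
    (N : ℕ) (g : ℝ) (hg : 0 < g)
    (l : Fin (N + 1) → ℝ) (hl : ∀ α, 0 < l α) (hlsum : ∑ α, l α = 1)
    (H pa zb : ℝ → ℝ → ℝ) (u : Fin (N + 1) → ℝ → ℝ → ℝ)
    (hH : ContDiff ℝ 1 fun p : ℝ × ℝ => H p.1 p.2) (hHpos : ∀ x t, 0 < H x t)
    (hu : ∀ α, ContDiff ℝ 1 fun p : ℝ × ℝ => u α p.1 p.2)
    (hpa : ContDiff ℝ 1 fun p : ℝ × ℝ => pa p.1 p.2)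
    (hzb : ContDiff ℝ 1 fun p : ℝ × ℝ => zb p.1 p.2)
    (uhalf : ℕ → ℝ → ℝ → ℝ)
    (huhalf : ∀ k, Continuous fun p : ℝ × ℝ => uhalf k p.1 p.2)
    (G : ℕ → ℝ → ℝ → ℝ)
    (hG : ∀ k x t, G k x t =
      ∑ j ∈ Finset.univ.filter (fun j : Fin (N + 1) => (j : ℕ) < k),
        (deriv (fun τ => l j * H x τ) t + deriv (fun y => l j * H y t * u j y t) x))
    (hcont : ∀ x t, deriv (fun τ => H x τ) t
      + deriv (fun y => ∑ α, l α * H y t * u α y t) x = 0)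
    (hmom : ∀ α : Fin (N + 1), ∀ x t,
      deriv (fun τ => l α * H x τ * u α x τ) t
        + deriv (fun y => l α * H y t * (u α y t) ^ 2
            + g / (2 * l α) * (l α * H y t) ^ 2) x
      = -(l α * H x t) * deriv (fun y => pa y t) x
        - g * (l α * H x t) * deriv (fun y => zb y t) x
        + uhalf ((α : ℕ) + 1) x t * G ((α : ℕ) + 1) x t
        - uhalf (α : ℕ) x t * G (α : ℕ) x t)
    (E : Fin (N + 1) → ℝ → ℝ → ℝ)
    (hE : ∀ α y t, E α y t =
      l α * H y t * (u α y t) ^ 2 / 2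
        + g * (l α * H y t) * ((H y t + zb y t) + zb y t) / 2
        + l α * H y t * pa y t)
    (hupwind : ∀ β : Fin N, ∀ x t,
      (0 ≤ G ((β : ℕ) + 1) x t → uhalf ((β : ℕ) + 1) x t = u β.succ x t) ∧
      (G ((β : ℕ) + 1) x t < 0 → uhalf ((β : ℕ) + 1) x t = u β.castSucc x t)) :
    (∀ x t,
      (∑ β : Fin N,
          G ((β : ℕ) + 1) x t
            * (uhalf ((β : ℕ) + 1) x t - (u β.castSucc x t + u β.succ x t) / 2)
            * (u β.castSucc x t - u β.succ x t))
        = -∑ β : Fin N,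
            |G ((β : ℕ) + 1) x t| * (u β.succ x t - u β.castSucc x t) ^ 2 / 2 ∧
      (∑ β : Fin N,
          G ((β : ℕ) + 1) x t
            * (uhalf ((β : ℕ) + 1) x t - (u β.castSucc x t + u β.succ x t) / 2)
            * (u β.castSucc x t - u β.succ x t)) ≤ 0) ∧
    (∀ x t,
      deriv (fun τ => ∑ α, E α x τ) t
        + deriv (fun y => ∑ α, u α y t * (E α y t + g / 2 * (l α * H y t) * H y t)) x
      ≤ H x t * deriv (fun τ => pa x τ) t
        + g * H x t * deriv (fun τ => zb x τ) t) :=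
  multilayer_energy_dissipation_upwind_general N g l hl hlsum H pa zb u hH hu hpa hzb uhalf G hG
    hcont hmom E hE hupwind
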